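/- Let S be a nonempty finite set, A = (A_{ss'}) a real S×S matrix, and b_s nonzero reals with Σ_{s'} A_{ss'} b_{s'} = 2 for all s ∈ S. Let μ > 0 and let P be real with P ≠ 0 and P > −2μ, and set B̄_s = −b_s P (P + 2μ). Define H_s(z) = (1 + P z)^{b_s} (real power). Then each H_s is positive on [0, (2μ)^{-1}], H_s(0) = 1, and for all z ∈ (0, (2μ)^{-1}): d/dz ( (1 − 2μ z) · H_s'(z)/H_s(z) ) = B̄_s · Π_{s'∈S} H_{s'}(z)^{−A_{ss'}}. -/

import Mathlib

/-!
Inside the horizon interval the base `u = 1 + P z` is positive. There `H_s'/H_s = b_s P / u`,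
so the left side of the master equation is the derivative of `b_s P (1 - 2μz) / u`, namely
`-b_s P (P + 2μ) / u²`; on the right, `Σ_{s'} A_{ss'} b_{s'} = 2` collapses the product
`Π_{s'} u^{-b_{s'} A_{ss'}}` to `u⁻²`.
-/

open Finset

lemma one_add_mul_pos_of_mem_Icc {μ P z : ℝ} (hμ : 0 < μ) (hP : -2 * μ < P)
    (hz : z ∈ Set.Icc (0 : ℝ) (2 * μ)⁻¹) : 0 < 1 + P * z := by
  obtain ⟨hz0, hz1⟩ := hz
  have hμz : 2 * μ * z ≤ 1 := by
    rwa [← mul_one (2 * μ)⁻¹, le_inv_mul_iff₀ (by positivity)] at hz1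
  nlinarith [mul_nonneg (by linarith : (0 : ℝ) ≤ P + 2 * μ) hz0]

lemma deriv_affine_rpow_div_self {P b w : ℝ} (hw : 0 < 1 + P * w) :
    deriv (fun w => (1 + P * w) ^ b) w / (1 + P * w) ^ b = P * b / (1 + P * w) := by
  have hlin : HasDerivAt (fun w => 1 + P * w) P w := by
    simpa using ((hasDerivAt_id w).const_mul P).const_add 1
  rw [(hlin.rpow_const (Or.inl hw.ne')).deriv, Real.rpow_sub hw, Real.rpow_one]
  have : (1 + P * w) ^ b ≠ 0 := (Real.rpow_pos_of_pos hw b).ne'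
  field_simp

lemma hasDerivAt_one_sub_mul_mul_div_one_add_mul (μ P c z : ℝ) (hz : 1 + P * z ≠ 0) :
    HasDerivAt (fun w => (1 - 2 * μ * w) * (c / (1 + P * w)))
      (-c * (P + 2 * μ) / (1 + P * z) ^ 2) z := by
  have hnum : HasDerivAt (fun w => 1 - 2 * μ * w) (-(2 * μ)) z := by
    simpa using ((hasDerivAt_id z).const_mul (2 * μ)).const_sub 1
  have hden : HasDerivAt (fun w => 1 + P * w) P z := by
    simpa using ((hasDerivAt_id z).const_mul P).const_add 1
  refine (hnum.fun_mul ((hasDerivAt_const z c).fun_div hden hz)).congr_deriv ?_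
  field_simp
  ring

lemma prod_rpow_rpow_neg {ι : Type*} (s : Finset ι) {u : ℝ} (hu : 0 < u) (a b : ι → ℝ) :
    ∏ i ∈ s, (u ^ b i) ^ (-a i) = u ^ (-∑ i ∈ s, a i * b i) := by
  simp_rw [← Real.rpow_mul hu.le, ← Real.rpow_sum_of_pos hu, ← sum_neg_distrib]
  congr 1
  exact sum_congr rfl fun i _ => by ring

theorem stmt19_general (S : Type) [Fintype S]
    (A : Matrix S S ℝ) (b : S → ℝ)
    (hb : ∀ s, ∑ s', A s s' * b s' = 2)
    (μ : ℝ) (hμ : 0 < μ) (P : ℝ) (hPgt : -2 * μ < P)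
    (Bbar : S → ℝ) (hBbar : ∀ s, Bbar s = -(b s) * P * (P + 2 * μ))
    (H : S → ℝ → ℝ) (hH : ∀ s z, H s z = (1 + P * z) ^ (b s)) :
    (∀ s, ∀ z ∈ Set.Icc (0 : ℝ) (2 * μ)⁻¹, 0 < H s z) ∧
    (∀ s, H s 0 = 1) ∧
    (∀ s, ∀ z ∈ Set.Ioo (0 : ℝ) (2 * μ)⁻¹,
      deriv (fun w => (1 - 2 * μ * w) * (deriv (H s) w / H s w)) z
        = Bbar s * ∏ s', H s' z ^ (-(A s s'))) := by
  obtain rfl : H = fun s z => (1 + P * z) ^ (b s) := funext₂ hH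
  have hpos := fun z (hz : z ∈ Set.Icc (0 : ℝ) (2 * μ)⁻¹) =>
    one_add_mul_pos_of_mem_Icc hμ hPgt hz
  refine ⟨fun s z hz => Real.rpow_pos_of_pos (hpos z hz) _, fun s => by simp, ?_⟩
  intro s z hz
  have hu := hpos z (Set.Ioo_subset_Icc_self hz)
  have hlog : (fun w => (1 - 2 * μ * w) * (deriv (fun w => (1 + P * w) ^ b s) w
        / (1 + P * w) ^ b s)) =ᶠ[nhds z] fun w => (1 - 2 * μ * w) * (P * b s / (1 + P * w)) := by
    have hopen : IsOpen {w : ℝ | 0 < 1 + P * w} := isOpen_lt continuous_const (by fun_prop)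
    filter_upwards [hopen.mem_nhds hu] with w hw
    rw [deriv_affine_rpow_div_self hw]
  rw [hlog.deriv_eq, (hasDerivAt_one_sub_mul_mul_div_one_add_mul μ P _ z hu.ne').deriv,
    prod_rpow_rpow_neg _ hu, hb, hBbar, Real.rpow_neg hu.le, Real.rpow_two]
  field_simp

/-- The one-block (block-orthogonal) moduli functions `H_s(z) = (1 + P z)^{b_s}`
(real power), with `Σ_{s'} A_{ss'} b_{s'} = 2`, `P ≠ 0`, `P > −2μ` and
`B̄_s = −b_s P(P + 2μ)`, are positive on `[0, (2μ)^{-1}]`, satisfy `H_s(0) = 1`, and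
solve the black-brane master equations
`d/dz((1 − 2μz) H_s'/H_s) = B̄_s Π_{s'} H_{s'}^{−A_{ss'}}`. -/
theorem stmt19 (S : Type) [Fintype S] [Nonempty S]
    (A : Matrix S S ℝ) (b : S → ℝ) (hbne : ∀ s, b s ≠ 0)
    (hb : ∀ s, ∑ s', A s s' * b s' = 2)
    (μ : ℝ) (hμ : 0 < μ) (P : ℝ) (hPne : P ≠ 0) (hPgt : -2 * μ < P)
    (Bbar : S → ℝ) (hBbar : ∀ s, Bbar s = -(b s) * P * (P + 2 * μ))
    (H : S → ℝ → ℝ) (hH : ∀ s z, H s z = (1 + P * z) ^ (b s)) :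
    (∀ s, ∀ z ∈ Set.Icc (0 : ℝ) (2 * μ)⁻¹, 0 < H s z) ∧
    (∀ s, H s 0 = 1) ∧
    (∀ s, ∀ z ∈ Set.Ioo (0 : ℝ) (2 * μ)⁻¹,
      deriv (fun w => (1 - 2 * μ * w) * (deriv (H s) w / H s w)) z
        = Bbar s * ∏ s', H s' z ^ (-(A s s'))) :=
  stmt19_general S A b hb μ hμ P hPgt Bbar hBbar H hH
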